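/- Let ℙ be a Bernoulli measure on ∂M, let a ∈ Σ, and let M′ₐ be the submonoid of M consisting of heaps with no occurrence of a. Then the three series Σ_{x∈M′ₐ} ℙ(↑x), Σ_{x∈M′ₐ} |x|·ℙ(↑x) and Σ_{x∈M′ₐ} |x|²·ℙ(↑x) are all finite. -/

import Mathlib

/-!
Fix a heap `δ` in which every piece occurs. If `x`, `y` are `a`-free and `x·δ·u = y·δ·v`, then
`x = y`: for dependent pieces `s`, `c`, equal numbers of `c` in `x` and `y` force equal
projections of `x` and `y` onto `{s, c}` (both are prefixes of the same word, followed by the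
projection of `δ`, which contains `c`), hence equal numbers of `s`. Walking the connected
dependence graph from `a`, all projections agree, and a heap is determined by its projections.
So the cylinders `↑(x·δ)`, `x ∈ M′ₐ`, are disjoint, and `(∑ ℙ(↑x)) · ℙ(↑δ) ≤ 1`.

Cutting a word of an `a`-free heap `x` after `i` letters, `i = 0, …, |x|`, injects the pairs
`(x, i)` into `M′ₐ × M′ₐ`. By multiplicativity this gives `∑ (|x| + 1) ℙ(↑x) ≤ (∑ ℙ(↑x))²`, and
cutting the weight `(|x| + 1) ℙ(↑x)` in the same way, `∑ (|x| + 1)² ℙ(↑x) ≤ (∑ (|x| + 1) ℙ(↑x))²`.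
-/

open MeasureTheory Filter
open scoped ENNReal NNReal

namespace HeapPaper

variable {S : Type}

/-- Commutation pairs of words, generating the trace congruence. -/
def CommRel (I : S → S → Prop) (w₁ w₂ : FreeMonoid S) : Prop :=
  ∃ a b : S, I a b ∧ w₁ = FreeMonoid.of a * FreeMonoid.of b ∧
    w₂ = FreeMonoid.of b * FreeMonoid.of a

/-- The congruence on the free monoid generated by the commutation of independent pieces. -/
def HeapCon (I : S → S → Prop) : Con (FreeMonoid S) := conGen (CommRel I)

/-- The heap monoid `M(Σ, I)`:  the presented monoid `⟨Σ | ab = ba, (a,b) ∈ I⟩`. -/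
def Heap (I : S → S → Prop) := (HeapCon I).Quotient

instance (I : S → S → Prop) : Monoid (Heap I) :=
  inferInstanceAs (Monoid (HeapCon I).Quotient)

/-- The unique additive extension to heaps of a function `φ` defined on pieces. -/
def addExt {A : Type} [AddCommMonoid A] {I : S → S → Prop} (φ : S → A) : Heap I → A :=
  fun x => Multiplicative.toAdd <|
    (Con.lift (HeapCon I) (FreeMonoid.lift fun a => Multiplicative.ofAdd (φ a))
      (Con.conGen_le.mpr (by
        rintro w₁ w₂ ⟨a, b, hab, rfl, rfl⟩
        exact (Con.ker_rel _).mpr (by simp [map_mul, mul_comm])))) x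

/-- The length `|x|` of a heap: the common length of its representative words. -/
def len {I : S → S → Prop} (x : Heap I) : ℕ := addExt (fun _ => 1) x

/-- The number `|x|ₐ` of occurrences of the piece `a` in the heap `x`. -/
def occ {I : S → S → Prop} [DecidableEq S] (a : S) (x : Heap I) : ℕ :=
  addExt (fun b => if b = a then 1 else 0) x

/-- The additive extension `⟨φ, x⟩` of a real-valued cost function. -/
def pairing {I : S → S → Prop} (φ : S → ℝ) (x : Heap I) : ℝ := addExt φ x

/-- The left-divisibility order on the heap monoid. -/
def hLe {I : S → S → Prop} (x y : Heap I) : Prop := ∃ z : Heap I, y = x * z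

/-- Cliques: finite sets of pairwise independent pieces. -/
def Cl (I : S → S → Prop) := {s : Finset S // ∀ a ∈ s, ∀ b ∈ s, a ≠ b → I a b}

/-- The empty clique. -/
def emptyCl (I : S → S → Prop) : Cl I := ⟨∅, by simp⟩

/-- The heap associated with a clique (product of its pieces, in any order). -/
def Cl.heap {I : S → S → Prop} (γ : Cl I) : Heap I :=
  γ.1.noncommProd (fun a => (HeapCon I).mk' (FreeMonoid.of a)) (by
    intro a ha b hb hab
    have hI : I a b := γ.2 a ha b hb hab
    show (HeapCon I).mk' (FreeMonoid.of a) * (HeapCon I).mk' (FreeMonoid.of b)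
        = (HeapCon I).mk' (FreeMonoid.of b) * (HeapCon I).mk' (FreeMonoid.of a)
    rw [← map_mul, ← map_mul]
    exact (Con.eq _).mpr (ConGen.Rel.of _ _ ⟨a, b, hI, rfl, rfl⟩))

/-- The Cartier–Foata move relation `γ → γ'` between cliques. -/
def Move {I : S → S → Prop} (γ γ' : Cl I) : Prop :=
  ∀ b ∈ γ'.1, ∃ a ∈ γ.1, ¬ I a b

/-- The boundary `∂M`: infinite admissible sequences of nonempty cliques. -/
def Bnd (I : S → S → Prop) :=
  {ξ : ℕ → Cl I // (∀ n, (ξ n).1.Nonempty) ∧ ∀ n, Move (ξ n) (ξ (n + 1))}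

/-- `M̄ = M ∪ ∂M`. -/
def MB (I : S → S → Prop) := Heap I ⊕ Bnd I

/-- Partial products of a sequence of cliques. -/
def ppSeq {I : S → S → Prop} (c : ℕ → Cl I) (n : ℕ) : Heap I :=
  ((List.range n).map fun i => (c i).heap).prod

/-- `c` is the Cartier–Foata decomposition of the heap `x`, padded with empty cliques:
`c` is admissible, eventually empty, with partial products eventually equal to `x`. -/
def CFprop (I : S → S → Prop) (c : ℕ → Cl I) (x : Heap I) : Prop :=
  (∀ n, Move (c n) (c (n + 1))) ∧
    ∃ N, ∀ n, N ≤ n → ppSeq c n = x ∧ c n = emptyCl I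

/-- The (padded) Cartier–Foata decomposition of a heap. -/
noncomputable def cf (I : S → S → Prop) (x : Heap I) : ℕ → Cl I :=
  letI := Classical.propDecidable (∃ c, CFprop I c x)
  if h : ∃ c, CFprop I c x then h.choose else fun _ => emptyCl I

/-- The Cartier–Foata sequence of an element of `M̄`. -/
noncomputable def seqOf {I : S → S → Prop} : MB I → ℕ → Cl I
  | .inl x => cf I x
  | .inr ξ => ξ.1

/-- Partial products of the Cartier–Foata sequence of an element of `M̄`. -/
noncomputable def pp {I : S → S → Prop} (ζ : MB I) (n : ℕ) : Heap I :=
  ppSeq (seqOf ζ) n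

/-- The order on `M̄`: `ξ ≤ ξ'` iff `γ₁⋯γₙ ≤ γ'₁⋯γ'ₙ` in `M` for all `n`. -/
noncomputable def mLe {I : S → S → Prop} (ζ ζ' : MB I) : Prop :=
  ∀ n : ℕ, hLe (pp ζ n) (pp ζ' n)

/-- The elementary cylinder `↑x ⊆ ∂M` of base `x ∈ M`. -/
noncomputable def cyl {I : S → S → Prop} (x : Heap I) : Set (Bnd I) :=
  {ξ : Bnd I | mLe (.inl x) (.inr ξ)}

/-- The σ-algebra `𝔉` on `∂M` generated by the elementary cylinders. -/
noncomputable def Fsa (I : S → S → Prop) : MeasurableSpace (Bnd I) :=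
  MeasurableSpace.generateFrom {A : Set (Bnd I) | ∃ x : Heap I, A = cyl x}

noncomputable instance (I : S → S → Prop) : MeasurableSpace (Bnd I) := Fsa I

/-- `ζ` is the least upper bound in `M̄` of the nondecreasing sequence `(x·γ₁⋯γₙ)ₙ`,
where `(γₙ)` is the Cartier–Foata sequence of `ξ`; this characterizes `x·ξ`. -/
noncomputable def IsConc {I : S → S → Prop} (x : Heap I) (ξ : Bnd I) (ζ : MB I) : Prop :=
  (∀ n : ℕ, mLe (.inl (x * pp (.inr ξ) n)) ζ) ∧
    ∀ η : MB I, (∀ n : ℕ, mLe (.inl (x * pp (.inr ξ) n)) η) → mLe ζ η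

/-- The concatenation `x·ξ ∈ ∂M` of a heap `x` and an infinite heap `ξ`. -/
noncomputable def concB {I : S → S → Prop} (x : Heap I) (ξ : Bnd I) : Bnd I :=
  letI := Classical.propDecidable (∃ ζ : Bnd I, IsConc x ξ (.inr ζ))
  if h : ∃ ζ : Bnd I, IsConc x ξ (.inr ζ) then h.choose else ξ

/-- The difference `ξ − x`: the unique `ζ ∈ ∂M` with `x·ζ = ξ` (junk value if none exists). -/
noncomputable def subB {I : S → S → Prop} (ξ : Bnd I) (x : Heap I) : Bnd I :=
  letI := Classical.propDecidable (∃ ζ : Bnd I, concB x ζ = ξ)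
  if h : ∃ ζ : Bnd I, concB x ζ = ξ then h.choose else ξ

/-- Asynchronous stopping time. -/
noncomputable def IsAST {I : S → S → Prop} (V : Bnd I → MB I) : Prop :=
  (∀ ξ : Bnd I, mLe (V ξ) (.inr ξ)) ∧
    ∀ (ξ ξ' : Bnd I) (x : Heap I), V ξ = .inl x → mLe (.inl x) (.inr ξ') → V ξ' = V ξ

/-- The shift operator `θ_V` associated with an AST `V` (junk: identity outside its domain). -/
noncomputable def shiftV {I : S → S → Prop} (V : Bnd I → MB I) (ξ : Bnd I) : Bnd I :=
  match V ξ with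
  | .inl x => subB ξ x
  | .inr _ => ξ

/-- The σ-algebra `𝔉_V` generated by the cylinders of the finite values of `V`. -/
noncomputable def astSA {I : S → S → Prop} (V : Bnd I → MB I) : MeasurableSpace (Bnd I) :=
  MeasurableSpace.generateFrom
    {A : Set (Bnd I) | ∃ x : Heap I, (∃ ξ : Bnd I, V ξ = .inl x) ∧ A = cyl x}

/-- The iterated sequence `(Vₙ)ₙ` of an AST `V`:  `V₀ = 0` and
`V_{n+1}(ξ) = Vₙ(ξ)·V(ξ − Vₙ(ξ))` if `Vₙ(ξ) ∈ M`, `V_{n+1}(ξ) = ξ` otherwise. -/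
noncomputable def iter {I : S → S → Prop} (V : Bnd I → MB I) : ℕ → Bnd I → MB I
  | 0, _ => .inl 1
  | n + 1, ξ =>
    match iter V n ξ with
    | .inl x =>
      match V (subB ξ x) with
      | .inl y => .inl (x * y)
      | .inr ζ => .inr (concB x ζ)
    | .inr _ => .inr ξ

/-- The increment `Δ_{n+1} = V ∘ θ_{Vₙ}` (junk value outside the domain of `θ_{Vₙ}`). -/
noncomputable def Delta {I : S → S → Prop} (V : Bnd I → MB I) (n : ℕ) (ξ : Bnd I) : MB I :=
  match iter V n ξ with
  | .inl x => V (subB ξ x)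
  | .inr _ => .inr ξ

/-- The length of an element of `M̄`, with `|ξ| = ∞` for `ξ ∈ ∂M`. -/
noncomputable def lenE {I : S → S → Prop} : MB I → ℝ≥0∞
  | .inl x => (len x : ℝ≥0∞)
  | .inr _ => ⊤

/-- `E|V| < ∞`. -/
noncomputable def EVfin {I : S → S → Prop} (P : Measure (Bnd I)) (V : Bnd I → MB I) : Prop :=
  ∫⁻ ξ, lenE (V ξ) ∂P < ⊤

/-- The AST `V` is exhaustive: it is `ℙ`-a.s. finite and `ℙ`-a.s. `ξ = ⋁ₙ Vₙ(ξ)`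
(`ξ` is the least upper bound of its iterates). -/
noncomputable def Exhaustive {I : S → S → Prop} (P : Measure (Bnd I)) (V : Bnd I → MB I) : Prop :=
  (∀ᵐ ξ ∂P, ∃ x : Heap I, V ξ = .inl x) ∧
    ∀ᵐ ξ ∂P, (∀ n : ℕ, mLe (iter V n ξ) (.inr ξ)) ∧
      ∀ ζ : MB I, (∀ n : ℕ, mLe (iter V n ξ) ζ) → mLe (.inr ξ) ζ

/-- `ℙ` is a Bernoulli measure: a probability measure on `(∂M, 𝔉)` that is multiplicative
and positive on elementary cylinders. -/
noncomputable def IsBernoulli {I : S → S → Prop} (P : Measure (Bnd I)) : Prop :=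
  IsProbabilityMeasure P ∧
    (∀ x y : Heap I, P (cyl (x * y)) = P (cyl x) * P (cyl y)) ∧
    ∀ x : Heap I, 0 < P (cyl x)

/-- `ζ` is the greatest lower bound, within the complete lattice `L(ξ)`, of the set
`Hₐ(ξ)` of finite subheaps of `ξ` containing an occurrence of `a`:  this characterizes
the first hitting time of `a`. -/
noncomputable def IsHit {I : S → S → Prop} [DecidableEq S] (a : S) (ξ : Bnd I) (ζ : MB I) :
    Prop :=
  mLe ζ (.inr ξ) ∧
    (∀ x : Heap I, mLe (.inl x) (.inr ξ) → 0 < occ a x → mLe ζ (.inl x)) ∧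
    ∀ η : MB I, mLe η (.inr ξ) →
      (∀ x : Heap I, mLe (.inl x) (.inr ξ) → 0 < occ a x → mLe η (.inl x)) → mLe η ζ

/-- The first hitting time of the piece `a`. -/
noncomputable def hit {I : S → S → Prop} [DecidableEq S] (a : S) (ξ : Bnd I) : MB I :=
  letI := Classical.propDecidable (∃ ζ : MB I, IsHit a ξ ζ)
  if h : ∃ ζ : MB I, IsHit a ξ ζ then h.choose else .inr ξ

/-- A maximal clique: a maximal element of `(𝒞, ≤)`. -/
noncomputable def IsMaxCl {I : S → S → Prop} (γ : Cl I) : Prop :=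
  ∀ δ : Cl I, hLe γ.heap δ.heap → δ.heap = γ.heap

/-- The AST cutting an infinite heap at the first occurrence of a maximal clique. -/
noncomputable def Vmax {I : S → S → Prop} (ξ : Bnd I) : MB I :=
  letI := Classical.propDecidable
  if h : ∃ k : ℕ, IsMaxCl (ξ.1 k) then .inl (ppSeq ξ.1 (Nat.find h + 1)) else .inr ξ

/-- The ergodic mean `⟨φ, x⟩ / |x|` (junk value `0` on infinite heaps). -/
noncomputable def ratioC {I : S → S → Prop} (φ : S → ℝ) : MB I → ℝ
  | .inl x => pairing φ x / (len x : ℝ)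
  | .inr _ => 0

/-- The ratio `φ(x)/|x|` for `φ` defined on heaps (junk value `0` on infinite heaps). -/
noncomputable def ratioH {I : S → S → Prop} (φ : Heap I → ℝ) : MB I → ℝ
  | .inl x => φ x / (len x : ℝ)
  | .inr _ => 0

/-- The set `ℭ` of nonempty cliques. -/
def NCl (I : S → S → Prop) := {γ : Cl I // γ.1.Nonempty}

instance [Fintype S] (I : S → S → Prop) : Finite (Cl I) :=
  inferInstanceAs (Finite {s : Finset S // ∀ a ∈ s, ∀ b ∈ s, a ≠ b → I a b})

instance [Fintype S] (I : S → S → Prop) : Finite (NCl I) :=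
  inferInstanceAs (Finite {γ : Cl I // γ.1.Nonempty})

/-- The valuation `f(x) = ℙ(↑x)` associated with `ℙ`. -/
noncomputable def fval {I : S → S → Prop} (P : Measure (Bnd I)) (x : Heap I) : ℝ :=
  (P (cyl x)).toReal

open Classical in
/-- The Möbius transform `h` of the valuation `f` associated with `ℙ`. -/
noncomputable def mobius {I : S → S → Prop} (P : Measure (Bnd I)) (γ : Cl I) : ℝ :=
  ∑ᶠ γ' : Cl I,
    if hLe γ.heap γ'.heap then (-1 : ℝ) ^ (γ'.1.card - γ.1.card) * fval P γ'.heap else 0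

open Classical in
/-- The normalization `g(γ) = Σ_{γ'∈ℭ, γ→γ'} h(γ')`. -/
noncomputable def gnorm {I : S → S → Prop} (P : Measure (Bnd I)) (γ : Cl I) : ℝ :=
  ∑ᶠ γ' : Cl I, if γ'.1.Nonempty ∧ Move γ γ' then mobius P γ' else 0

open Classical in
/-- The transition matrix of the Markov chain of cliques. -/
noncomputable def Pmat {I : S → S → Prop} (P : Measure (Bnd I)) (γ γ' : Cl I) : ℝ :=
  if Move γ γ' then mobius P γ' / gnorm P γ else 0

/-- `π` is a stationary probability distribution, carried by the nonempty cliques, of the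
Markov chain of cliques. -/
noncomputable def IsStationary {I : S → S → Prop} (P : Measure (Bnd I)) (π : Cl I → ℝ) :
    Prop :=
  (∀ γ : Cl I, 0 ≤ π γ) ∧ (π (emptyCl I) = 0) ∧ (∑ᶠ γ : Cl I, π γ = 1) ∧
    ∀ γ' : Cl I, π γ' = ∑ᶠ γ : Cl I, π γ * Pmat P γ γ'

open Classical in
/-- The nonnegative matrix `B` on `ℭ×ℭ`: `B_{γ,γ'} = f(γ')` if `γ → γ'`, else `0`. -/
noncomputable def Bmat {I : S → S → Prop} (P : Measure (Bnd I)) :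
    Matrix (NCl I) (NCl I) ℝ :=
  fun γ γ' => if Move γ.1 γ'.1 then fval P γ'.1.heap else 0

/-- The spectral radius of `B` (as a complex matrix). -/
noncomputable def specRadB [Fintype S] {I : S → S → Prop} (P : Measure (Bnd I)) : ℝ≥0∞ :=
  letI : Fintype (NCl I) := Fintype.ofFinite _
  letI : DecidableEq (NCl I) := Classical.decEq _
  spectralRadius ℂ ((Bmat P).map (algebraMap ℝ ℂ))

/-- The height `τ(x)` of a heap: the number of cliques in its Cartier–Foata decomposition. -/
noncomputable def height {I : S → S → Prop} (x : Heap I) : ℕ :=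
  sInf {N : ℕ | ∀ n, N ≤ n → cf I x n = emptyCl I}

/-- The ratio `|x|/τ(x)` (junk value `0` on infinite heaps). -/
noncomputable def speedRatio {I : S → S → Prop} : MB I → ℝ
  | .inl x => (len x : ℝ) / (height x : ℝ)
  | .inr _ => 0

/-- `ψ ∘ θ_V` extended by `0` outside the domain of `θ_V`. -/
noncomputable def extShift {I : S → S → Prop} (V : Bnd I → MB I) (ψ : Bnd I → ℝ)
    (η : Bnd I) : ℝ :=
  match V η with
  | .inl _ => ψ (shiftV V η)
  | .inr _ => 0

variable {I : S → S → Prop}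

def Heap.mk (I : S → S → Prop) : FreeMonoid S →* Heap I := (HeapCon I).mk'

lemma Heap.mk_surjective : Function.Surjective (Heap.mk I) := Con.mk'_surjective

def piece (s : S) : Heap I := Heap.mk I (FreeMonoid.of s)

lemma Heap.mk_cons (c : S) (t : List S) :
    Heap.mk I (FreeMonoid.ofList (c :: t)) = piece c * Heap.mk I (FreeMonoid.ofList t) := by
  rw [piece, ← map_mul]
  rfl

lemma piece_mul_piece_comm {b c : S} (h : I b c) :
    piece (I := I) b * piece c = piece c * piece b := by
  rw [piece, piece, ← map_mul, ← map_mul]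
  exact (Con.eq _).mpr (ConGen.Rel.of _ _ ⟨b, c, h, rfl, rfl⟩)

instance [Countable S] : Countable (Heap I) :=
  inferInstanceAs (Countable (Quotient (HeapCon I).toSetoid))

section Counting

lemma addExt_mk {A : Type} [AddCommMonoid A] (φ : S → A) (w : FreeMonoid S) :
    addExt φ (Heap.mk I w) = (w.toList.map φ).sum := by
  unfold addExt Heap.mk
  refine (congrArg Multiplicative.toAdd (Con.lift_mk' _ w)).trans ?_
  rw [FreeMonoid.lift_apply]
  induction w.toList with
  | nil => simp
  | cons c t ih => simp_all

lemma addExt_mul {A : Type} [AddCommMonoid A] (φ : S → A) (x y : Heap I) :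
    addExt φ (x * y) = addExt φ x + addExt φ y :=
  congrArg Multiplicative.toAdd (map_mul _ x y)

lemma len_mul (x y : Heap I) : len (x * y) = len x + len y := addExt_mul _ x y

lemma len_mk (w : FreeMonoid S) : len (Heap.mk I w) = w.toList.length := by
  simp [len, addExt_mk]

variable [DecidableEq S]

lemma occ_mul (s : S) (x y : Heap I) : occ s (x * y) = occ s x + occ s y := addExt_mul _ x y

lemma occ_eq_zero_of_mul (s : S) (x y : Heap I) (h : occ s (x * y) = 0) :
    occ s x = 0 ∧ occ s y = 0 := by
  rw [occ_mul] at h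
  omega

lemma occ_mk (s : S) (w : FreeMonoid S) : occ s (Heap.mk I w) = w.toList.count s := by
  rw [occ, addExt_mk]
  induction w.toList with
  | nil => simp
  | cons c t ih => by_cases h : c = s <;> simp [ih, h, Nat.add_comm]

lemma exists_forall_occ_pos [Fintype S] : ∃ δ : Heap I, ∀ s, 0 < occ s δ :=
  ⟨Heap.mk I (FreeMonoid.ofList Finset.univ.toList), fun s => by
    rw [occ_mk]
    exact List.count_pos_iff.mpr (by simp)⟩

end Counting

section Projection

def filterHom (p : S → Bool) : FreeMonoid S →* FreeMonoid S where
  toFun w := FreeMonoid.ofList (w.toList.filter p)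
  map_one' := rfl
  map_mul' x y := by simp [List.filter_append]

lemma filterHom_apply (p : S → Bool) (w : FreeMonoid S) :
    filterHom p w = FreeMonoid.ofList (w.toList.filter p) := rfl

def proj (p : S → Bool) (hp : ∀ e f, I e f → p e → p f → e = f) : Heap I →* FreeMonoid S :=
  Con.lift (HeapCon I) (filterHom p) (Con.conGen_le.mpr (by
    rintro _ _ ⟨e, f, hef, rfl, rfl⟩
    refine (Con.ker_rel _).mpr ?_
    by_cases h : p e ∧ p f
    · rw [hp e f hef h.1 h.2]
    · rw [filterHom_apply, filterHom_apply]
      cases he : p e <;> cases hf : p f <;> simp_all))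

lemma proj_mk (p : S → Bool) (hp : ∀ e f, I e f → p e → p f → e = f) (w : FreeMonoid S) :
    proj p hp (Heap.mk I w) = FreeMonoid.ofList (w.toList.filter p) :=
  Con.lift_mk' _ w

variable [DecidableEq S]

lemma count_proj (p : S → Bool) (hp : ∀ e f, I e f → p e → p f → e = f) {r : S} (hr : p r)
    (x : Heap I) : (proj p hp x).toList.count r = occ r x := by
  obtain ⟨w, rfl⟩ := Heap.mk_surjective x
  rw [proj_mk, occ_mk, FreeMonoid.toList_ofList]
  exact List.count_filter hr

def pairProj (hsymm : ∀ a b : S, I a b → I b a) (p q : S) (hpq : ¬ I p q) :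
    Heap I →* FreeMonoid S :=
  proj (fun e => e = p || e = q) (by
    intro e f hef he hf
    simp only [Bool.or_eq_true, decide_eq_true_eq] at he hf
    rcases he with rfl | rfl <;> rcases hf with rfl | rfl
    exacts [rfl, absurd hef hpq, absurd (hsymm _ _ hef) hpq, rfl])

lemma pairProj_mk (hsymm : ∀ a b : S, I a b → I b a) {p q : S} (hpq : ¬ I p q)
    (w : FreeMonoid S) :
    pairProj hsymm p q hpq (Heap.mk I w) =
      FreeMonoid.ofList (w.toList.filter fun e => e = p || e = q) :=
  proj_mk _ _ w

lemma count_pairProj_left (hsymm : ∀ a b : S, I a b → I b a) {p q : S} (hpq : ¬ I p q)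
    (x : Heap I) : (pairProj hsymm p q hpq x).toList.count p = occ p x :=
  count_proj _ _ (by simp) x

lemma count_pairProj_right (hsymm : ∀ a b : S, I a b → I b a) {p q : S} (hpq : ¬ I p q)
    (x : Heap I) : (pairProj hsymm p q hpq x).toList.count q = occ q x :=
  count_proj _ _ (by simp) x

end Projection

theorem _root_.List.eq_nil_of_append_eq_append {α : Type*} [DecidableEq α] {D E U V : List α}
    {q : α} (hD : q ∉ D) (hE : q ∈ E) (h : E ++ U = D ++ (E ++ V)) : D = [] := by
  have := congrArg (List.idxOf q) h
  rw [List.idxOf_append_of_mem hE, List.idxOf_append_of_notMem hD,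
    List.idxOf_append_of_mem hE] at this
  exact List.eq_nil_of_length_eq_zero (by omega)

theorem _root_.List.eq_of_append_eq_append_of_count_eq {α : Type*} [DecidableEq α]
    {A B E U V : List α} {q : α} (h : A ++ (E ++ U) = B ++ (E ++ V))
    (hq : A.count q = B.count q) (hE : q ∈ E) : A = B := by
  rcases List.append_eq_append_iff.mp h with ⟨D, rfl, hD⟩ | ⟨D, rfl, hD⟩
  all_goals
    have hqD : q ∉ D := List.count_eq_zero.mp (by rw [List.count_append] at hq; omega)
    rw [List.eq_nil_of_append_eq_append hqD hE hD, List.append_nil]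

section Cancellation

variable [DecidableEq S]

lemma pairProj_eq_of_occ_eq (hsymm : ∀ a b : S, I a b → I b a) {p q : S} (hpq : ¬ I p q)
    {δ x y u v : Heap I} (hδ : 0 < occ q δ) (h : x * (δ * u) = y * (δ * v))
    (hq : occ q x = occ q y) :
    pairProj hsymm p q hpq x = pairProj hsymm p q hpq y := by
  have hcount := count_pairProj_right hsymm hpq
  have hwords := congrArg (fun z => (pairProj hsymm p q hpq z).toList) h
  simp only [map_mul, FreeMonoid.toList_mul] at hwords
  exact FreeMonoid.toList.injective <| List.eq_of_append_eq_append_of_count_eq hwords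
    (by rw [hcount, hcount, hq]) (List.count_pos_iff.mp (by rwa [hcount]))

lemma occ_eq_of_mul_mul_eq (hsymm : ∀ a b : S, I a b → I b a)
    (hconn : ∀ a b : S, Relation.ReflTransGen (fun x y : S => x ≠ y ∧ ¬ I x y) a b)
    {a : S} {δ x y u v : Heap I} (hδ : ∀ s, 0 < occ s δ) (h : x * (δ * u) = y * (δ * v))
    (hx : occ a x = 0) (hy : occ a y = 0) (s : S) : occ s x = occ s y := by
  induction hconn s a using Relation.ReflTransGen.head_induction_on with
  | refl => rw [hx, hy]
  | @head s c hsc _ ih =>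
    have hproj := pairProj_eq_of_occ_eq hsymm hsc.2 (hδ c) h ih
    rw [← count_pairProj_left hsymm hsc.2, hproj, count_pairProj_left]

lemma exists_eq_piece_mul {b : S} {w : List S} (hb : b ∈ w)
    (hhead : ∀ q, ¬ I b q → b ≠ q → ∃ t, w.filter (fun e => e = b || e = q) = b :: t) :
    ∃ y, Heap.mk I (FreeMonoid.ofList w) = piece b * y := by
  induction w with
  | nil => simp at hb
  | cons c t ih =>
    by_cases hcb : c = b
    · subst hcb
      exact ⟨_, Heap.mk_cons c t⟩
    by_cases hbc : I b c
    · have htail : ∀ q, ¬ I b q → b ≠ q →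
          ∃ t', t.filter (fun e => e = b || e = q) = b :: t' := by
        intro q hbq hne
        have hcq : c ≠ q := by rintro rfl; exact hbq hbc
        simpa [List.filter_cons, hcb, hcq] using hhead q hbq hne
      obtain ⟨y, hy⟩ := ih (List.mem_of_ne_of_mem (Ne.symm hcb) hb) htail
      refine ⟨piece c * y, ?_⟩
      rw [Heap.mk_cons, hy, ← mul_assoc, ← piece_mul_piece_comm hbc, mul_assoc]
    · obtain ⟨t', ht'⟩ := hhead c hbc (Ne.symm hcb)
      rw [List.filter_cons_of_pos (by simp)] at ht'
      exact absurd (List.cons.inj ht').1 hcb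

/-- The first piece `b` of a word of `x` comes first in every projection of `y` onto `{b, q}`,
so it can be moved to the front of `y` (`exists_eq_piece_mul`); then cancel it. -/
theorem eq_of_occ_eq_of_pairProj_eq (hsymm : ∀ a b : S, I a b → I b a) {x y : Heap I}
    (hocc : ∀ s, occ s x = occ s y)
    (hproj : ∀ p q (hpq : ¬ I p q), p ≠ q → pairProj hsymm p q hpq x = pairProj hsymm p q hpq y) :
    x = y := by
  obtain ⟨w, rfl⟩ := Heap.mk_surjective x
  rw [← FreeMonoid.ofList_toList w] at hocc hproj ⊢
  generalize w.toList = t at hocc hproj ⊢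
  obtain ⟨v, rfl⟩ := Heap.mk_surjective y
  induction t generalizing v with
  | nil =>
    rcases hv : v.toList with _ | ⟨c, _⟩
    · rw [← FreeMonoid.ofList_toList v, hv]
    · have hc := hocc c
      rw [occ_mk, occ_mk, hv] at hc
      simp at hc
  | cons b t ih =>
    have hb : b ∈ v.toList := by
      have hcount := hocc b
      rw [occ_mk, occ_mk] at hcount
      exact List.count_pos_iff.mp (by simp [← hcount])
    have hhead : ∀ q, ¬ I b q → b ≠ q →
        ∃ t', v.toList.filter (fun e => e = b || e = q) = b :: t' := by
      intro q hbq hne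
      have hfilter := congrArg FreeMonoid.toList (hproj b q hbq hne)
      rw [pairProj_mk, pairProj_mk] at hfilter
      exact ⟨t.filter fun e => e = b || e = q, by simpa using hfilter.symm⟩
    obtain ⟨y, hy⟩ := exists_eq_piece_mul hb hhead
    have hv : Heap.mk I v = piece b * y := hy
    rw [hv, Heap.mk_cons]
    congr 1
    obtain ⟨v', rfl⟩ := Heap.mk_surjective y
    refine ih v' (fun s => ?_) (fun p q hpq hne => ?_)
    · have hs := hocc s
      rw [Heap.mk_cons, hv, occ_mul, occ_mul] at hs
      omega
    · have hpq' := hproj p q hpq hne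
      rw [Heap.mk_cons, hv, map_mul, map_mul] at hpq'
      exact mul_left_cancel hpq'

theorem eq_of_mul_mul_eq (hsymm : ∀ a b : S, I a b → I b a)
    (hconn : ∀ a b : S, Relation.ReflTransGen (fun x y : S => x ≠ y ∧ ¬ I x y) a b)
    {a : S} {δ x y u v : Heap I} (hδ : ∀ s, 0 < occ s δ) (h : x * (δ * u) = y * (δ * v))
    (hx : occ a x = 0) (hy : occ a y = 0) : x = y :=
  have hocc := occ_eq_of_mul_mul_eq hsymm hconn hδ h hx hy
  eq_of_occ_eq_of_pairProj_eq hsymm hocc fun _ q hpq _ =>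
    pairProj_eq_of_occ_eq hsymm hpq (hδ q) h (hocc q)

end Cancellation

section Cylinders

lemma cf_spec (hCF : ∀ x : Heap I, ∃ c, CFprop I c x) (x : Heap I) : CFprop I (cf I x) x := by
  rw [cf, dif_pos (hCF x)]
  exact (hCF x).choose_spec

lemma eventually_hLe_pp_of_mem_cyl (hCF : ∀ x : Heap I, ∃ c, CFprop I c x) {x : Heap I}
    {ξ : Bnd I} (h : ξ ∈ cyl x) : ∀ᶠ n in atTop, hLe x (pp (.inr ξ) n) := by
  obtain ⟨-, N, hN⟩ := cf_spec hCF x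
  filter_upwards [eventually_ge_atTop N] with n hn
  simpa [pp, seqOf, (hN n hn).1] using h n

lemma measurableSet_cyl (x : Heap I) : MeasurableSet (cyl x) :=
  MeasurableSpace.measurableSet_generateFrom ⟨x, rfl⟩

variable [DecidableEq S]

lemma pairwise_disjoint_cyl_mul (hsymm : ∀ a b : S, I a b → I b a)
    (hconn : ∀ a b : S, Relation.ReflTransGen (fun x y : S => x ≠ y ∧ ¬ I x y) a b)
    (hCF : ∀ x : Heap I, ∃ c, CFprop I c x) {a : S} {δ : Heap I} (hδ : ∀ s, 0 < occ s δ) :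
    Pairwise fun x y : {x : Heap I // occ a x = 0} =>
      Disjoint (cyl (x.1 * δ)) (cyl (y.1 * δ)) := by
  intro x y hxy
  refine Set.disjoint_left.mpr fun ξ hξx hξy => hxy (Subtype.ext ?_)
  obtain ⟨n, ⟨u, hu⟩, ⟨v, hv⟩⟩ :=
    ((eventually_hLe_pp_of_mem_cyl hCF hξx).and (eventually_hLe_pp_of_mem_cyl hCF hξy)).exists
  rw [mul_assoc] at hu hv
  exact eq_of_mul_mul_eq hsymm hconn hδ (hu.symm.trans hv) x.2 y.2

theorem tsum_cyl_lt_top [Fintype S] (hsymm : ∀ a b : S, I a b → I b a)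
    (hconn : ∀ a b : S, Relation.ReflTransGen (fun x y : S => x ≠ y ∧ ¬ I x y) a b)
    (hCF : ∀ x : Heap I, ∃ c, CFprop I c x) {P : Measure (Bnd I)} (hP : IsBernoulli P) (a : S) :
    ∑' x : {x : Heap I // occ a x = 0}, P (cyl x.1) < ⊤ := by
  obtain ⟨δ, hδ⟩ := exists_forall_occ_pos (I := I)
  have : IsProbabilityMeasure P := hP.1
  have hle : (∑' x : {x : Heap I // occ a x = 0}, P (cyl x.1)) * P (cyl δ) ≤ 1 :=
    calc (∑' x : {x : Heap I // occ a x = 0}, P (cyl x.1)) * P (cyl δ)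
        = ∑' x : {x : Heap I // occ a x = 0}, P (cyl (x.1 * δ)) := by
          rw [← ENNReal.tsum_mul_right]
          simp only [hP.2.1]
      _ = P (⋃ x : {x : Heap I // occ a x = 0}, cyl (x.1 * δ)) :=
          (measure_iUnion (pairwise_disjoint_cyl_mul hsymm hconn hCF hδ)
            fun _ => measurableSet_cyl _).symm
      _ ≤ 1 := prob_le_one
  exact ENNReal.lt_top_of_mul_ne_top_left (hle.trans_lt ENNReal.one_lt_top).ne (hP.2.2 δ).ne'

end Cylinders

section Splitting

lemma exists_mul_eq_len_eq {x : Heap I} {i : ℕ} (hi : i ≤ len x) :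
    ∃ y z, y * z = x ∧ len y = i := by
  obtain ⟨w, rfl⟩ := Heap.mk_surjective x
  rw [len_mk] at hi
  refine ⟨Heap.mk I (FreeMonoid.ofList (w.toList.take i)),
    Heap.mk I (FreeMonoid.ofList (w.toList.drop i)), ?_, ?_⟩
  · rw [← map_mul, ← FreeMonoid.ofList_append, List.take_append_drop, FreeMonoid.ofList_toList]
  · simp [len_mk, hi]

theorem tsum_len_add_one_mul_le {Q : Heap I → Prop} (hQ : ∀ y z, Q (y * z) → Q y ∧ Q z)
    (G : Heap I → ℝ≥0∞) :
    ∑' x : {x // Q x}, (len x.1 + 1 : ℝ≥0∞) * G x.1 ≤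
      ∑' p : {x // Q x} × {x // Q x}, G (p.1.1 * p.2.1) := by
  have hcut : ∀ (x : {x // Q x}) (i : Fin (len x.1 + 1)),
      ∃ p : {x // Q x} × {x // Q x}, p.1.1 * p.2.1 = x.1 ∧ len p.1.1 = i := by
    intro x i
    obtain ⟨y, z, hyz, hy⟩ := exists_mul_eq_len_eq (Nat.lt_succ_iff.mp i.2)
    have hQyz := hQ y z (hyz ▸ x.2)
    exact ⟨(⟨y, hQyz.1⟩, ⟨z, hQyz.2⟩), hyz, hy⟩
  choose cut hcut_mul hcut_len using hcut
  have hinj :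
      Function.Injective fun d : Σ x : {x // Q x}, Fin (len x.1 + 1) => cut d.1 d.2 := by
    rintro ⟨x, i⟩ ⟨y, j⟩ h
    obtain rfl : x = y := Subtype.ext <| by
      rw [← hcut_mul x i, ← hcut_mul y j]
      exact congrArg (fun p => p.1.1 * p.2.1) h
    obtain rfl : i = j := Fin.ext <| by
      rw [← hcut_len x i, ← hcut_len x j]
      exact congrArg (fun p => len p.1.1) h
    rfl
  calc ∑' x : {x // Q x}, (len x.1 + 1 : ℝ≥0∞) * G x.1
      = ∑' d : Σ x : {x // Q x}, Fin (len x.1 + 1), G d.1.1 := by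
        rw [ENNReal.tsum_sigma']
        simp [tsum_fintype]
    _ = ∑' d : Σ x : {x // Q x}, Fin (len x.1 + 1),
          G ((cut d.1 d.2).1.1 * (cut d.1 d.2).2.1) := by
        simp only [hcut_mul]
    _ ≤ ∑' p : {x // Q x} × {x // Q x}, G (p.1.1 * p.2.1) :=
        ENNReal.tsum_comp_le_tsum_of_injective hinj fun p => G (p.1.1 * p.2.1)

lemma tsum_prod_mul {α β : Type*} (f : α → ℝ≥0∞) (g : β → ℝ≥0∞) :
    ∑' p : α × β, f p.1 * g p.2 = (∑' a, f a) * ∑' b, g b := by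
  rw [ENNReal.tsum_prod', ← ENNReal.tsum_mul_right]
  simp only [ENNReal.tsum_mul_left]

variable {Q : Heap I → Prop} (hQ : ∀ y z, Q (y * z) → Q y ∧ Q z) {f : Heap I → ℝ≥0∞}
  (hf : ∀ x y, f (x * y) = f x * f y)
include hQ hf

theorem tsum_len_add_one_mul_le_sq :
    ∑' x : {x // Q x}, (len x.1 + 1 : ℝ≥0∞) * f x.1 ≤ (∑' x : {x // Q x}, f x.1) ^ 2 :=
  calc ∑' x : {x // Q x}, (len x.1 + 1 : ℝ≥0∞) * f x.1
      ≤ ∑' p : {x // Q x} × {x // Q x}, f (p.1.1 * p.2.1) := tsum_len_add_one_mul_le hQ f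
    _ = (∑' x : {x // Q x}, f x.1) ^ 2 := by
        simp only [hf]
        exact (tsum_prod_mul (fun x : {x // Q x} => f x.1) fun x : {x // Q x} => f x.1).trans
          (sq _).symm

theorem tsum_len_add_one_sq_mul_le_sq :
    ∑' x : {x // Q x}, (len x.1 + 1 : ℝ≥0∞) ^ 2 * f x.1 ≤
      (∑' x : {x // Q x}, (len x.1 + 1 : ℝ≥0∞) * f x.1) ^ 2 :=
  calc ∑' x : {x // Q x}, (len x.1 + 1 : ℝ≥0∞) ^ 2 * f x.1
      = ∑' x : {x // Q x}, (len x.1 + 1 : ℝ≥0∞) * ((len x.1 + 1) * f x.1) := by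
        simp only [sq, mul_assoc]
    _ ≤ ∑' p : {x // Q x} × {x // Q x},
          (len (p.1.1 * p.2.1) + 1 : ℝ≥0∞) * f (p.1.1 * p.2.1) :=
        tsum_len_add_one_mul_le hQ fun x => (len x + 1 : ℝ≥0∞) * f x
    _ ≤ ∑' p : {x // Q x} × {x // Q x},
          ((len p.1.1 + 1 : ℝ≥0∞) * f p.1.1) * ((len p.2.1 + 1) * f p.2.1) := by
        refine ENNReal.tsum_le_tsum fun p => ?_
        rw [hf, len_mul, mul_mul_mul_comm]
        gcongr
        exact_mod_cast
          (by nlinarith : len p.1.1 + len p.2.1 + 1 ≤ (len p.1.1 + 1) * (len p.2.1 + 1))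
    _ = (∑' x : {x // Q x}, (len x.1 + 1 : ℝ≥0∞) * f x.1) ^ 2 :=
        (tsum_prod_mul (fun x : {x // Q x} => (len x.1 + 1 : ℝ≥0∞) * f x.1)
          fun x : {x // Q x} => (len x.1 + 1 : ℝ≥0∞) * f x.1).trans (sq _).symm

end Splitting

theorem series_over_submonoid_finite_general
    {S : Type} [Fintype S] [DecidableEq S] (I : S → S → Prop)
    (hsymm : ∀ a b : S, I a b → I b a)
    (hconn : ∀ a b : S, Relation.ReflTransGen (fun x y : S => x ≠ y ∧ ¬ I x y) a b)
    (hCF : ∀ x : Heap I, ∃! c : ℕ → Cl I, CFprop I c x)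
    (P : Measure (Bnd I)) (hP : IsBernoulli P)
    (a : S) :
    (∑' x : {x : Heap I // occ a x = 0}, P (cyl x.1)) < ⊤ ∧
    (∑' x : {x : Heap I // occ a x = 0}, (len x.1 : ℝ≥0∞) * P (cyl x.1)) < ⊤ ∧
    (∑' x : {x : Heap I // occ a x = 0}, (len x.1 : ℝ≥0∞) ^ 2 * P (cyl x.1)) < ⊤ := by
  have hT := tsum_cyl_lt_top hsymm hconn (fun x => (hCF x).exists) hP a
  have hL : ∑' x : {x : Heap I // occ a x = 0}, (len x.1 + 1 : ℝ≥0∞) * P (cyl x.1) < ⊤ :=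
    (tsum_len_add_one_mul_le_sq (Q := (occ a · = 0)) (f := (P <| cyl ·))
      (occ_eq_zero_of_mul a) hP.2.1).trans_lt (ENNReal.pow_lt_top hT)
  have hL₂ : ∑' x : {x : Heap I // occ a x = 0}, (len x.1 + 1 : ℝ≥0∞) ^ 2 * P (cyl x.1) < ⊤ :=
    (tsum_len_add_one_sq_mul_le_sq (Q := (occ a · = 0)) (f := (P <| cyl ·))
      (occ_eq_zero_of_mul a) hP.2.1).trans_lt (ENNReal.pow_lt_top hL)
  refine ⟨hT, lt_of_le_of_lt (ENNReal.tsum_le_tsum fun x => ?_) hL,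
    lt_of_le_of_lt (ENNReal.tsum_le_tsum fun x => ?_) hL₂⟩
  all_goals gcongr; exact le_self_add

theorem series_over_submonoid_finite
    {S : Type} [Fintype S] [DecidableEq S] (I : S → S → Prop)
    (hsymm : ∀ a b : S, I a b → I b a)
    (hirr : ∀ a : S, ¬ I a a)
    (hconn : ∀ a b : S, Relation.ReflTransGen (fun x y : S => x ≠ y ∧ ¬ I x y) a b)
    (hcard : 1 < Fintype.card S)
    (hCF : ∀ x : Heap I, ∃! c : ℕ → Cl I, CFprop I c x)
    (P : Measure (Bnd I)) (hP : IsBernoulli P)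
    (a : S) :
    (∑' x : {x : Heap I // occ a x = 0}, P (cyl x.1)) < ⊤ ∧
    (∑' x : {x : Heap I // occ a x = 0}, (len x.1 : ℝ≥0∞) * P (cyl x.1)) < ⊤ ∧
    (∑' x : {x : Heap I // occ a x = 0}, (len x.1 : ℝ≥0∞) ^ 2 * P (cyl x.1)) < ⊤ :=
  series_over_submonoid_finite_general I hsymm hconn hCF P hP a

end HeapPaper
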